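/- arXiv:2603.19089 — 3 statements merged into one kernel-verified Lean document; each statement's English description precedes it below -/
import Mathlib

section
/- Let d ≥ 2, k = √(d²-1), t₁, t₂ ∈ (0, 1] with t₂/t₁ ≤ d² and t₁/t₂ ≤ d², and set g = d(t₁+t₂), h = (d/k)(t₂-t₁). At the point θ* with sinh θ* = k(t₂-t₁)/(2d√(t₁t₂) - (t₂+t₁)) and cosh θ* = (d(t₂-t₁)² + 2k²(t₁+t₂)√(t₁t₂))/(4d²t₁t₂ - (t₂+t₁)²), the function f(θ) = (g + h·sinh θ)/(d + cosh θ) takes the value f(θ*) = (d²(t₁+t₂) - 2d√(t₁t₂))/(d²-1). -/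
/-- At the critical point `θ*` with the given hyperbolic values, the function
`f(θ) = (g + h·sinh θ)/(d + cosh θ)` evaluates to
`(d²(t₁+t₂) - 2d√(t₁t₂))/(d²-1)`. -/
theorem value_of_f_at_critical_point (d : ℝ) (hd : 2 ≤ d) (k t₁ t₂ g h θ : ℝ)
    (hk : k = Real.sqrt (d ^ 2 - 1))
    (ht₁ : t₁ ∈ Set.Ioc (0 : ℝ) 1) (ht₂ : t₂ ∈ Set.Ioc (0 : ℝ) 1)
    (hr₁ : t₂ / t₁ ≤ d ^ 2) (hr₂ : t₁ / t₂ ≤ d ^ 2)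
    (hg : g = d * (t₁ + t₂)) (hh : h = (d / k) * (t₂ - t₁))
    (hs : Real.sinh θ = k * (t₂ - t₁) / (2 * d * Real.sqrt (t₁ * t₂) - (t₂ + t₁)))
    (hc : Real.cosh θ =
      (d * (t₂ - t₁) ^ 2 + 2 * k ^ 2 * (t₁ + t₂) * Real.sqrt (t₁ * t₂)) /
        (4 * d ^ 2 * t₁ * t₂ - (t₂ + t₁) ^ 2)) :
    (g + h * Real.sinh θ) / (d + Real.cosh θ)
      = (d ^ 2 * (t₁ + t₂) - 2 * d * Real.sqrt (t₁ * t₂)) / (d ^ 2 - 1) := by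
  obtain ⟨ht₁0, ht₁1⟩ := ht₁
  obtain ⟨ht₂0, ht₂1⟩ := ht₂
  set s := Real.sqrt (t₁ * t₂) with hsdef
  have hs2 : s ^ 2 = t₁ * t₂ := Real.sq_sqrt (by positivity)
  have hspos : 0 < s := Real.sqrt_pos.mpr (by positivity)
  have hd2 : (0:ℝ) < d ^ 2 - 1 := by nlinarith
  have hk2 : k ^ 2 = d ^ 2 - 1 := by
    rw [hk]; exact Real.sq_sqrt (le_of_lt hd2)
  have hkpos : 0 < k := by
    rw [hk]; exact Real.sqrt_pos.mpr hd2
  have h1 : t₂ ≤ d ^ 2 * t₁ := by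
    have := (div_le_iff₀ ht₁0).mp hr₁; linarith
  have h2 : t₁ ≤ d ^ 2 * t₂ := by
    have := (div_le_iff₀ ht₂0).mp hr₂; linarith
  have hB : 0 < 4 * d ^ 2 * t₁ * t₂ - (t₂ + t₁) ^ 2 := by
    have hprod : 0 ≤ (d^2*t₁ - t₂)*(d^2*t₂ - t₁) :=
      mul_nonneg (by linarith) (by linarith)
    have hd4 : (4:ℝ) ≤ d^2 := by nlinarith
    have hc1 : (0:ℝ) < 3*d^4 - 2*d^2 - 1 := by nlinarith [sq_nonneg (d^2-4)]
    nlinarith [hprod, mul_pos hc1 (mul_pos ht₁0 ht₂0), mul_pos ht₁0 ht₂0,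
      (show (0:ℝ) < d^2 by positivity)]
  have hA : 0 < 2 * d * s - (t₂ + t₁) := by
    nlinarith [mul_pos (mul_pos (by linarith : (0:ℝ) < 2 * d) hspos)
      (by linarith : (0:ℝ) < t₂ + t₁)]
  have hnum : g + h * Real.sinh θ
      = d * (2*s*(d*(t₁+t₂) - 2*s)) / (2*d*s - (t₂+t₁)) := by
    rw [hg, hh, hs]
    field_simp [show d * 2 * s - (t₂ + t₁) ≠ 0 by linarith]
    linear_combination 4 * hs2
  have hden : d + Real.cosh θ = 2*k^2*s/(2*d*s - (t₂+t₁)) := by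
    rw [hc]
    field_simp [show d * 2 * s - (t₂ + t₁) ≠ 0 by linarith, show d ^ 2 * t₂ * t₁ * 4 - (t₂ + t₁) ^ 2 ≠ 0 by linarith]
    linear_combination (4*d*(t₁+t₂)*s^2 - 8*d^2*t₁*t₂*s) * hk2
      + (4*d*(d^2-1)*(t₁+t₂)) * hs2
  rw [hnum, hden, hk2, div_eq_div_iff (ne_of_gt (div_pos (by positivity) hA))
    (ne_of_gt hd2), mul_div_assoc', div_mul_eq_mul_div,
    div_eq_div_iff hA.ne' hA.ne']
  ring
end

section
/- For every integer d ≥ 2 and real p with 0 ≤ p ≤ 1, the optimal value of the linear program maximize α·p·d + 2·p·d²·x − c subject to (c−1)/d ≤ α, 0 ≤ x(d+1) ≤ (c+1)/d − α, and 0 ≤ c ≤ 1, equals p·(3d−1)/(d+1). -/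
/-- The first branch linear program of the dual for 1-to-2 probabilistic virtual
broadcasting has optimal value `p(3d-1)/(d+1)`. -/
theorem first_branch_LP_optimal_value (d : ℤ) (hd : 2 ≤ d) (p : ℝ)
    (hp0 : 0 ≤ p) (hp1 : p ≤ 1) :
    IsGreatest {v : ℝ | ∃ α x c : ℝ,
        (c - 1) / (d : ℝ) ≤ α ∧
        0 ≤ x * ((d : ℝ) + 1) ∧ x * ((d : ℝ) + 1) ≤ (c + 1) / (d : ℝ) - α ∧
        0 ≤ c ∧ c ≤ 1 ∧
        v = α * p * (d : ℝ) + 2 * p * (d : ℝ) ^ 2 * x - c}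
      (p * (3 * (d : ℝ) - 1) / ((d : ℝ) + 1)) := by
  have hdr : (2:ℝ) ≤ (d:ℝ) := by exact_mod_cast hd
  have hd0 : (0:ℝ) < (d:ℝ) := by linarith
  have hd1 : (0:ℝ) < (d:ℝ) + 1 := by linarith
  constructor
  · refine ⟨-1/(d:ℝ), 2/((d:ℝ)*((d:ℝ)+1)), 0, ?_, ?_, ?_, le_refl _, zero_le_one, ?_⟩
    · rw [div_le_div_iff₀ hd0 hd0]; linarith
    · positivity
    · have e1 : (2:ℝ)/((d:ℝ)*((d:ℝ)+1)) * ((d:ℝ)+1) = 2/(d:ℝ) := by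
        field_simp
      have e2 : ((0:ℝ)+1)/(d:ℝ) - (-1/(d:ℝ)) = 2/(d:ℝ) := by
        field_simp
        ring
      rw [e1, e2]
    · field_simp
      ring
  · rintro v ⟨α, x, c, h1, h2, h3, h4, h5, rfl⟩
    have H1 : c - 1 ≤ α * (d:ℝ) := (div_le_iff₀ hd0).mp h1
    have H3 : (x * ((d:ℝ)+1) + α) * (d:ℝ) ≤ c + 1 := by
      rw [← le_div_iff₀ hd0]; linarith
    rw [le_div_iff₀ hd1]
    nlinarith [mul_nonneg (mul_nonneg (mul_nonneg (by norm_num : (0:ℝ) ≤ 2) hp0) hd0.le)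
        (by linarith : (0:ℝ) ≤ c + 1 - (x * ((d:ℝ)+1) + α) * (d:ℝ)),
      mul_nonneg (mul_nonneg hp0 (by linarith : (0:ℝ) ≤ (d:ℝ) - 1))
        (by linarith : (0:ℝ) ≤ α * (d:ℝ) - (c - 1)),
      mul_nonneg (mul_nonneg h4 hd1.le) (by linarith : (0:ℝ) ≤ 1 - p)]
end

section
/- For integers N ≥ 2 and real d ≥ 1, the deterministic (p = 1) sample-efficiency condition (((2N−1)d − (N−1))/(d + N − 1))² < N is equivalent to d < (√N + 1)²/(2√N + 1). -/
/-- Deterministic (`p = 1`) sample-efficiency criterion: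
`(((2N-1)d - (N-1))/(d+N-1))² < N` iff `d < (√N+1)²/(2√N+1)`. -/
theorem deterministic_sample_efficiency_iff (N : ℤ) (hN : 2 ≤ N) (d : ℝ) (hd : 1 ≤ d) :
    (((2 * (N : ℝ) - 1) * d - ((N : ℝ) - 1)) / (d + (N : ℝ) - 1)) ^ 2 < (N : ℝ) ↔
      d < (Real.sqrt (N : ℝ) + 1) ^ 2 / (2 * Real.sqrt (N : ℝ) + 1) := by
  have hn : (2:ℝ) ≤ (N:ℝ) := by exact_mod_cast hN
  set s := Real.sqrt (N:ℝ) with hsdef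
  have hs0 : 0 ≤ s := Real.sqrt_nonneg _
  have hs2 : s ^ 2 = (N:ℝ) := Real.sq_sqrt (by linarith)
  have hs1 : 1 < s := by nlinarith
  have hg : 0 < d + (N:ℝ) - 1 := by linarith
  have hf : 0 < (2 * (N:ℝ) - 1) * d - ((N:ℝ) - 1) := by nlinarith
  rw [div_pow, div_lt_iff₀ (by positivity),
    lt_div_iff₀ (by nlinarith : (0:ℝ) < 2 * s + 1)]
  constructor
  · intro h
    have hfg : (2 * (N:ℝ) - 1) * d - ((N:ℝ) - 1) < s * (d + (N:ℝ) - 1) := by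
      by_contra hc
      push_neg at hc
      nlinarith [mul_le_mul hc hc (by positivity) (le_of_lt hf)]
    nlinarith [hfg, hs2, hs1]
  · intro h
    have hfg : (2 * (N:ℝ) - 1) * d - ((N:ℝ) - 1) < s * (d + (N:ℝ) - 1) := by
      nlinarith [h, hs2, hs1]
    nlinarith [mul_lt_mul_of_pos_right hfg hf,
      mul_lt_mul_of_pos_left hfg (show (0:ℝ) < s * (d + (N:ℝ) - 1) by positivity), hs2]
end
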